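/- The infinite Fibonacci word u is not eventually periodic; equivalently, there is no nonempty finite word x with u = x^ω (infinite repetition of x). -/

import Mathlib

/-!
An eventually periodic word with period `p` has letter frequencies `k / p`, where `k` counts
the letter in one period. The prefix `ρⁿ(a)` of the Fibonacci word (`ufib n`, with `a` encoded
as `true`) has length `F (n + 2)` and contains `F (n + 1)` letters `a`, so the frequency of `a`
is `lim F (n + 1) / F (n + 2) = -ψ`, which is irrational.
-/

def rho (w : List Bool) : List Bool := w.flatMap (fun c => if c then [true, false] else [true])

def ufib : ℕ → List Bool
  | 0 => [true]
  | n + 1 => rho (ufib n)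

def uinf (n : ℕ) : Bool := (ufib n).getD n true

open Filter Topology Nat Real
open scoped goldenRatio

namespace Nat

variable {P : ℕ → Prop} [DecidablePred P] {q N : ℕ}

theorem count_add_period (hper : ∀ n ≥ N, (P (n + q) ↔ P n)) {L : ℕ} (hL : N ≤ L) :
    count P (L + q) = count P L + count (fun j => P (N + j)) q := by
  induction L, hL using Nat.le_induction with
  | base => exact count_add P N q
  | succ L hL ih =>
    rw [add_right_comm, count_succ, count_succ, ih, if_congr (hper L hL) rfl rfl]
    ring

theorem abs_period_mul_count_sub_le (hq : 0 < q) (hper : ∀ n ≥ N, (P (n + q) ↔ P n)) (L : ℕ) :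
    |(q * count P L : ℤ) - count (fun j => P (N + j)) q * L| ≤ 2 * q * (N + q) := by
  induction L using Nat.strong_induction_on with
  | _ L ih =>
    rcases lt_or_ge L (N + q) with hL | hL
    · have hc : count P L ≤ L := count_le _
      have hk : count (fun j => P (N + j)) q ≤ q := count_le _
      rw [abs_le]
      constructor <;> nlinarith
    · obtain ⟨L, rfl⟩ : ∃ L', L = L' + q := ⟨L - q, by omega⟩
      rw [count_add_period hper (by omega)]
      convert ih L (by omega) using 2
      push_cast
      ring

theorem tendsto_count_div_of_eventually_periodic (hq : 0 < q)
    (hper : ∀ n ≥ N, (P (n + q) ↔ P n)) :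
    Tendsto (fun L => (count P L : ℝ) / L) atTop
      (𝓝 ((count (fun j => P (N + j)) q : ℝ) / q)) := by
  rw [← tendsto_sub_nhds_zero_iff]
  refine squeeze_zero_norm' ?_ (tendsto_const_div_atTop_nhds_zero_nat (2 * (N + q) : ℝ))
  filter_upwards [eventually_gt_atTop 0] with L hL
  have hL' : (0 : ℝ) < L := by exact_mod_cast hL
  have hq' : (0 : ℝ) < q := by exact_mod_cast hq
  have hbound : |(count P L * q : ℝ) - L * count (fun j => P (N + j)) q| ≤ 2 * q * (N + q) := by
    rw [mul_comm _ (q : ℝ), mul_comm (L : ℝ)]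
    exact_mod_cast abs_period_mul_count_sub_le hq hper L
  rw [Real.norm_eq_abs, div_sub_div _ _ hL'.ne' hq'.ne', abs_div, abs_of_pos (mul_pos hL' hq'),
    div_le_div_iff₀ (by positivity) hL']
  nlinarith

end Nat

theorem rho_append (u v : List Bool) : rho (u ++ v) = rho u ++ rho v := by
  simp [rho]

theorem length_rho (w : List Bool) : (rho w).length = w.length + w.count true := by
  induction w with
  | nil => rfl
  | cons c w ih => cases c <;> simp only [rho, List.flatMap_cons] at ih ⊢ <;> grind

theorem count_true_rho (w : List Bool) : (rho w).count true = w.length := by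
  induction w with
  | nil => rfl
  | cons c w ih => cases c <;> simp_all [rho]

theorem List.IsPrefix.rho {u v : List Bool} (h : u <+: v) : rho u <+: rho v := by
  obtain ⟨t, rfl⟩ := h
  rw [rho_append]
  exact List.prefix_append _ _

theorem length_ufib_and_count_true_ufib (n : ℕ) :
    (ufib n).length = fib (n + 2) ∧ (ufib n).count true = fib (n + 1) := by
  induction n with
  | zero => decide
  | succ n ih =>
    rw [ufib, length_rho, count_true_rho, ih.1, ih.2, fib_add_two (n := n + 1), add_comm]
    exact ⟨rfl, rfl⟩

theorem ufib_prefix_ufib_of_le {m n : ℕ} (h : m ≤ n) : ufib m <+: ufib n := by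
  refine Nat.rel_of_forall_rel_succ_of_le (· <+: ·) (fun n => ?_) h
  induction n with
  | zero => exact ⟨[false], rfl⟩
  | succ n ih => exact ih.rho

theorem ufib_eq_map_uinf (n : ℕ) : ufib n = (List.range (fib (n + 2))).map uinf := by
  refine List.ext_getElem (by simp [(length_ufib_and_count_true_ufib n).1]) fun i hn _ => ?_
  have hi : i < (ufib i).length := by
    simpa [(length_ufib_and_count_true_ufib i).1] using fib_add_two_strictMono.add_le_nat i 0
  simp only [List.getElem_map, List.getElem_range, uinf, List.getD_eq_getElem _ _ hi]
  rcases le_total i n with h | h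
  · exact ((ufib_prefix_ufib_of_le h).getElem hi).symm
  · exact (ufib_prefix_ufib_of_le h).getElem hn

theorem count_uinf_fib (n : ℕ) : count (fun i => uinf i = true) (fib (n + 2)) = fib (n + 1) := by
  rw [← (length_ufib_and_count_true_ufib n).2, ufib_eq_map_uinf, List.count_eq_countP,
    List.countP_map]
  simp [Nat.count, Function.comp_def]

theorem tendsto_fib_succ_div_fib_add_two :
    Tendsto (fun n => (fib (n + 1) : ℝ) / fib (n + 2)) atTop (𝓝 (-ψ)) := by
  simpa [add_assoc] using (tendsto_add_atTop_iff_nat 1).2 tendsto_fib_div_fib_succ_atTop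

/-- The infinite Fibonacci word is not eventually periodic (in particular it is not of the
form x^ω for a nonempty finite word x). -/
theorem fib_word_not_eventually_periodic :
    ¬ ∃ p : ℕ, 0 < p ∧ ∃ N : ℕ, ∀ n ≥ N, uinf (n + p) = uinf n := by
  rintro ⟨p, hp, N, hper⟩
  have hfreq := Nat.tendsto_count_div_of_eventually_periodic (P := fun i => uinf i = true) hp
    fun n hn => by rw [hper n hn]
  have hfib := hfreq.comp fib_add_two_strictMono.tendsto_atTop
  simp only [Function.comp_def, count_uinf_fib] at hfib
  have hψ := tendsto_nhds_unique tendsto_fib_succ_div_fib_add_two hfib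
  refine goldenConj_irrational.neg ⟨(count (fun j => uinf (N + j) = true) p / p : ℚ), ?_⟩
  rw [hψ]
  push_cast
  rfl
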